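/- arXiv:2101.08808 — 4 statements merged into one kernel-verified Lean document; each statement's English description precedes it below -/
import Mathlib

section
/- Let G1 and G2 be finite simple graphs in which every node has at least one neighbor, and let π : V1 → V2 be a bijection such that MNC(i, π(i)) = 1 for every node i of G1. Then π is a graph isomorphism from G1 to G2, i.e., (u,v) is an edge of G1 if and only if (π(u),π(v)) is an edge of G2. -/
/-- Matched neighborhood consistency: the Jaccard similarity between the mapped
neighborhood `π '' N_{G1}(i)` and the neighborhood `N_{G2}(j)`. -/
noncomputable def MNC {V1 V2 : Type*} (G1 : SimpleGraph V1) (G2 : SimpleGraph V2)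
    (π : V1 → V2) (i : V1) (j : V2) : ℚ :=
  (((π '' G1.neighborSet i) ∩ G2.neighborSet j).ncard : ℚ) /
    (((π '' G1.neighborSet i) ∪ G2.neighborSet j).ncard : ℚ)

/-- If every node of the finite simple graphs `G1` and `G2` has at least one
neighbor, and `π` is a bijection with `MNC(i, π(i)) = 1` for all `i`, then `π` is a graph
isomorphism from `G1` to `G2`. -/
theorem iso_of_perfect_mnc {V1 V2 : Type*} [Fintype V1] [Fintype V2]
    (G1 : SimpleGraph V1) (G2 : SimpleGraph V2)
    (h1 : ∀ v : V1, (G1.neighborSet v).Nonempty)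
    (h2 : ∀ v : V2, (G2.neighborSet v).Nonempty)
    (π : V1 ≃ V2) (hmnc : ∀ i : V1, MNC G1 G2 (⇑π) i (π i) = 1) :
    ∀ u v : V1, G1.Adj u v ↔ G2.Adj (π u) (π v) := by
  have key : ∀ i : V1, (⇑π '' G1.neighborSet i) = G2.neighborSet (π i) := by
    intro i
    set A := ⇑π '' G1.neighborSet i with hA
    set B := G2.neighborSet (π i) with hB
    have hfinA : A.Finite := Set.toFinite _
    have hfinU : (A ∪ B).Finite := Set.toFinite _
    have h := hmnc i
    rw [MNC] at h
    have hUne : ((A ∪ B).ncard : ℚ) ≠ 0 := by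
      intro h0
      rw [h0, div_zero] at h
      exact one_ne_zero h.symm
    have hcard : (A ∩ B).ncard = (A ∪ B).ncard := by
      have := div_eq_one_iff_eq hUne |>.mp h
      exact_mod_cast this
    have hsub : A ∩ B ⊆ A ∪ B := (Set.inter_subset_left).trans Set.subset_union_left
    have heq : A ∩ B = A ∪ B :=
      Set.eq_of_subset_of_ncard_le hsub hcard.ge hfinU
    have hAB : A ⊆ B := by
      intro x hx
      have : x ∈ A ∩ B := heq ▸ (Set.mem_union_left _ hx)
      exact this.2
    have hBA : B ⊆ A := by
      intro x hx
      have : x ∈ A ∩ B := heq ▸ (Set.mem_union_right _ hx)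
      exact this.1
    exact Set.Subset.antisymm hAB hBA
  intro u v
  constructor
  · intro h
    have : π v ∈ ⇑π '' G1.neighborSet u := ⟨v, h, rfl⟩
    rw [key u] at this
    exact this
  · intro h
    have : π v ∈ G2.neighborSet (π u) := h
    rw [← key u] at this
    obtain ⟨w, hw, hwe⟩ := this
    rwa [π.injective hwe] at hw
end

section
/- Let G1 and G2 be isomorphic finite simple graphs in which every node has at least one neighbor, with a graph isomorphism σ (the true correspondence). Suppose π : V1 → V2 is a bijection with MNC(v, π(v)) = 1 for every node v of G1. Then for every node v of G1, the node π(v) is structurally indistinguishable from the true counterpart σ(v); in particular, if π misaligns a node v (π(v) ≠ σ(v)), it is because π(v) is structurally indistinguishable from σ(v). -/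
/-- `kBall G u k` is the set of nodes at most `k` hops from `u` in `G` (i.e., reachable
from `u` by a walk of length at most `k`). -/
def kBall {V : Type*} (G : SimpleGraph V) (u : V) (k : ℕ) : Set V :=
  {v | ∃ w : G.Walk u v, w.length ≤ k}

/-- `u` and `v` are structurally indistinguishable if for every `k`, the subgraphs
induced by their `k`-hop neighborhoods are isomorphic. -/
def StructIndist {V V' : Type*} (G : SimpleGraph V) (G' : SimpleGraph V')
    (u : V) (v : V') : Prop :=
  ∀ k : ℕ, Nonempty ((G.induce (kBall G u k)) ≃g (G'.induce (kBall G' v k)))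

lemma isoInduce {V V' : Type*} (G : SimpleGraph V) (G' : SimpleGraph V') (e : G ≃g G')
    (s : Set V) : Nonempty (G.induce s ≃g G'.induce (e.toEquiv '' s)) := by
  refine ⟨⟨e.toEquiv.image s, ?_⟩⟩
  intro a b
  simp [Equiv.image, SimpleGraph.comap, e.map_adj_iff]

lemma ballMap {V V' : Type*} (G : SimpleGraph V) (G' : SimpleGraph V') (e : G ≃g G')
    (u : V) (k : ℕ) : e.toEquiv '' (kBall G u k) = kBall G' (e u) k := by
  ext v
  constructor
  · rintro ⟨x, ⟨w, hw⟩, rfl⟩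
    exact ⟨w.map e.toHom, by simpa using hw⟩
  · rintro ⟨w, hw⟩
    refine ⟨e.symm v, ?_, by simp⟩
    exact ⟨(w.map e.symm.toHom).copy (by simp) rfl, by simpa using hw⟩

/-- Theorem 3.2: Let `σ : G1 ≃g G2` be the true correspondence between
isomorphic graphs in which every node has a neighbor.  If the bijection `π` achieves
`MNC(v, π(v)) = 1` for all `v`, then every `π(v)` is structurally indistinguishable from
the true counterpart `σ(v)`; in particular any misalignment `π(v) ≠ σ(v)` is due to
structural indistinguishability. -/
theorem perfect_mnc_misaligns_only_indistinguishable {V1 V2 : Type*}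
    [Fintype V1] [Fintype V2] (G1 : SimpleGraph V1) (G2 : SimpleGraph V2)
    (h1 : ∀ v : V1, (G1.neighborSet v).Nonempty)
    (h2 : ∀ v : V2, (G2.neighborSet v).Nonempty)
    (σ : G1 ≃g G2) (π : V1 ≃ V2)
    (hmnc : ∀ v : V1, MNC G1 G2 (⇑π) v (π v) = 1) :
    ∀ v : V1, StructIndist G2 G2 (π v) (σ v) := by
  have hN : ∀ v : V1, (⇑π '' G1.neighborSet v) = G2.neighborSet (π v) := by
    intro v
    set A := ⇑π '' G1.neighborSet v with hA
    set B := G2.neighborSet (π v) with hB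
    have hfin : (A ∪ B).Finite := Set.toFinite _
    have hne : (A ∪ B).Nonempty := ((h2 (π v)).mono Set.subset_union_right)
    have hpos : 0 < (A ∪ B).ncard := (Set.ncard_pos hfin).mpr hne
    have hden : ((A ∪ B).ncard : ℚ) ≠ 0 := by exact_mod_cast hpos.ne'
    have hcard : (A ∩ B).ncard = (A ∪ B).ncard := by
      have := hmnc v
      rw [MNC, div_eq_one_iff_eq hden] at this
      exact_mod_cast this
    have heq : A ∩ B = A ∪ B :=
      Set.eq_of_subset_of_ncard_le (Set.inter_subset_left.trans Set.subset_union_left) hcard.ge hfin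
    have hsub : A ∪ B ⊆ A ∩ B := heq ▸ subset_rfl
    exact subset_antisymm (fun x hx => (hsub (Or.inl hx)).2)
      (fun x hx => (hsub (Or.inr hx)).1)
  let π' : G1 ≃g G2 := ⟨π, by
    intro a b
    constructor
    · intro h
      have h' : π b ∈ G2.neighborSet (π a) := h
      rw [← hN a] at h'
      obtain ⟨c, hc, hcb⟩ := h'
      rwa [π.injective hcb] at hc
    · intro h
      have h' : π b ∈ ⇑π '' G1.neighborSet a := ⟨b, h, rfl⟩
      rw [hN a] at h'
      exact h'⟩
  intro v k
  let e : G2 ≃g G2 := σ.symm.trans π'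
  have he : e (σ v) = π v := by
    show π (σ.symm (σ v)) = π v
    simp
  obtain ⟨f⟩ := isoInduce G2 G2 e (kBall G2 (σ v) k)
  rw [ballMap G2 G2 e (σ v) k, he] at f
  exact ⟨f.symm⟩
end

section
/- Perfect MNC does not force the correct alignment: let n ≥ 2 and let G1 and G2 be star graphs on n nodes, i.e., each has a distinguished center c and its edges are exactly those pairs containing the center (u is adjacent to v iff exactly one of u, v equals the center). Then every bijection π : V(G1) → V(G2) with π(c1) = c2 satisfies MNC(v, π(v)) = 1 for all nodes v, regardless of how it permutes the peripheral nodes. -/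
/-- Perfect MNC does not force the correct alignment.  If `G1` and `G2` are
star graphs on `n ≥ 2` nodes with centers `c1`, `c2` (two nodes are adjacent iff exactly
one of them is the center), then every bijection `π` mapping `c1` to `c2` satisfies
`MNC(v, π(v)) = 1` for all `v`, no matter how it permutes the peripheral nodes. -/
theorem star_graph_perfect_mnc {V1 V2 : Type*} [Fintype V1] [Fintype V2]
    (n : ℕ) (hn : 2 ≤ n) (hcard1 : Fintype.card V1 = n) (hcard2 : Fintype.card V2 = n)
    (G1 : SimpleGraph V1) (G2 : SimpleGraph V2) (c1 : V1) (c2 : V2)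
    (hG1 : ∀ u v : V1, G1.Adj u v ↔ ((u = c1 ∧ v ≠ c1) ∨ (u ≠ c1 ∧ v = c1)))
    (hG2 : ∀ u v : V2, G2.Adj u v ↔ ((u = c2 ∧ v ≠ c2) ∨ (u ≠ c2 ∧ v = c2)))
    (π : V1 ≃ V2) (hc : π c1 = c2) :
    ∀ v : V1, MNC G1 G2 (⇑π) v (π v) = 1 := by
  intro v
  have key : (⇑π '' G1.neighborSet v) = G2.neighborSet (π v) := by
    ext y
    simp only [Set.mem_image, SimpleGraph.mem_neighborSet, hG1, hG2]
    constructor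
    · rintro ⟨x, hx, rfl⟩
      rcases hx with ⟨hv, hne⟩ | ⟨hne, hx1⟩
      · subst hv
        exact Or.inl ⟨hc, fun h => hne (π.injective (h.trans hc.symm))⟩
      · refine Or.inr ⟨fun h => hne (π.injective (h.trans hc.symm)), ?_⟩
        rw [hx1, hc]
    · rintro (⟨hv, hy⟩ | ⟨hv, hy⟩)
      · have hv1 : v = c1 := π.injective (hv.trans hc.symm)
        refine ⟨π.symm y, Or.inl ⟨hv1, fun h => hy ?_⟩, π.apply_symm_apply y⟩
        rw [← hc, ← h, π.apply_symm_apply]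
      · exact ⟨c1, Or.inr ⟨fun h => hv (by rw [h, hc]), rfl⟩, hc.trans hy.symm⟩
  have hne : (G2.neighborSet (π v)).Nonempty := by
    by_cases h : v = c1
    · subst h
      obtain ⟨y, hy⟩ := Fintype.exists_ne_of_one_lt_card (by omega : 1 < Fintype.card V2) c2
      exact ⟨y, by simp [hG2, hc, hy]⟩
    · have hvc : π v ≠ c2 := fun h2 => h (π.injective (h2.trans hc.symm))
      exact ⟨c2, by simp [hG2, hvc]⟩
  have hfin : (G2.neighborSet (π v)).Finite := Set.toFinite _
  rw [MNC, key, Set.inter_self, Set.union_self]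
  have : (G2.neighborSet (π v)).ncard ≠ 0 := by
    simpa [Set.ncard_eq_zero hfin] using hne.ne_empty
  field_simp
end

section
/- Matrix form of MNC (Theorem 4.1): let G1 and G2 be finite simple graphs with adjacency matrices A1 and A2, let π : V1 → V2 be a bijection with permutation matrix M, and let i ∈ V1, j ∈ V2 be such that N_{G1}(i) or N_{G2}(j) is nonempty. Then, with all matrix arithmetic over the rationals, MNC(i,j) = (A1 · M · A2)_{ij} / ((A1 · M · 1)_i + (A2 · 1)_j − (A1 · M · A2)_{ij}), i.e., the matched neighborhood consistency of every pair (i,j) is the (i,j) entry of the matrix A1 M A2 divided elementwise by (A1 M 1) ⊗ 1 + 1 ⊗ (A2 1) − A1 M A2. -/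
/-!
Row `i` of `A1 * M` is the indicator vector of the mapped neighbourhood `π '' N(i)`, since
right multiplication by a permutation matrix only permutes columns. Hence `(A1 * M * A2)_{ij}`
counts `π '' N(i) ∩ N(j)`, the row sums `(A1 * M * 1)_i` and `(A2 * 1)_j` count the two
neighbourhoods, and inclusion–exclusion turns the denominator into `|π '' N(i) ∪ N(j)|`.
-/

open Matrix

theorem Set.natCast_ncard_union {α R : Type*} [AddGroupWithOne R] {s t : Set α}
    (hs : s.Finite) (ht : t.Finite) :
    ((s ∪ t).ncard : R) = s.ncard + t.ncard - (s ∩ t).ncard := by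
  rw [eq_sub_iff_add_eq, ← Nat.cast_add, ← Nat.cast_add,
    Set.ncard_union_add_ncard_inter s t hs ht]

namespace SimpleGraph

variable {V W R : Type*} [Fintype W] [NonAssocSemiring R]
  (G : SimpleGraph V) (H : SimpleGraph W) [DecidableRel G.Adj] [DecidableRel H.Adj]

theorem ncard_neighborSet [Fintype V] (v : V) : (G.neighborSet v).ncard = G.degree v := by
  rw [← Nat.card_coe_set_eq, Nat.card_eq_fintype_card, card_neighborSet_eq_degree]

theorem adjMatrix_mulVec_one_apply [Fintype V] (v : V) :
    (G.adjMatrix R *ᵥ fun _ => 1) v = ((G.neighborSet v).ncard : R) := by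
  rw [ncard_neighborSet]
  exact adjMatrix_mulVec_const_apply.trans (mul_one _)

theorem submatrix_equiv_mulVec_one_apply [Fintype V] (e : V ≃ W) (i : V) :
    ((G.adjMatrix R).submatrix id e.symm *ᵥ fun _ => 1) i
      = ((e '' G.neighborSet i).ncard : R) := by
  rw [submatrix_mulVec_equiv, Set.ncard_image_of_injective _ e.injective]
  exact G.adjMatrix_mulVec_one_apply i

theorem submatrix_equiv_mul_adjMatrix_apply (e : V ≃ W) (i : V) (j : W) :
    ((G.adjMatrix R).submatrix id e.symm * H.adjMatrix R) i j
      = ((e '' G.neighborSet i ∩ H.neighborSet j).ncard : R) := by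
  classical
  rw [e.image_eq_preimage_symm, Set.ncard_eq_toFinset_card', mul_apply]
  simp only [submatrix_apply, id_eq, adjMatrix_apply, ite_mul, one_mul, zero_mul, ← ite_and,
    Finset.sum_boole]
  congr 2
  ext
  simp [and_comm, adj_comm]

end SimpleGraph

theorem mnc_matrix_form_general {V1 V2 : Type*} [Fintype V1] [Fintype V2]
    [DecidableEq V2]
    (G1 : SimpleGraph V1) (G2 : SimpleGraph V2)
    [DecidableRel G1.Adj] [DecidableRel G2.Adj]
    (π : V1 ≃ V2) (M : Matrix V1 V2 ℚ)
    (hM : ∀ (k : V1) (l : V2), M k l = if π k = l then 1 else 0)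
    (i : V1) (j : V2) :
    MNC G1 G2 (⇑π) i j =
      (G1.adjMatrix ℚ * M * G2.adjMatrix ℚ) i j /
        (((G1.adjMatrix ℚ * M) *ᵥ (fun _ => (1 : ℚ))) i
          + (G2.adjMatrix ℚ *ᵥ (fun _ => (1 : ℚ))) j
          - (G1.adjMatrix ℚ * M * G2.adjMatrix ℚ) i j) := by
  have hM_perm : M = π.toPEquiv.toMatrix := by
    ext k l
    simp [hM, PEquiv.toMatrix_apply]
  rw [hM_perm, PEquiv.mul_toMatrix_toPEquiv, G1.submatrix_equiv_mul_adjMatrix_apply,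
    G1.submatrix_equiv_mulVec_one_apply, G2.adjMatrix_mulVec_one_apply, MNC,
    Set.natCast_ncard_union (Set.toFinite _) (Set.toFinite _)]

/-- Theorem 4.1, matrix form of MNC: with adjacency matrices `A1`, `A2`
over `ℚ` and permutation matrix `M` encoding the bijection `π`, for every pair `(i,j)`
with `N_{G1}(i)` or `N_{G2}(j)` nonempty,
`MNC(i,j) = (A1 M A2)_{ij} / ((A1 M 1)_i + (A2 1)_j − (A1 M A2)_{ij})`. -/
theorem mnc_matrix_form {V1 V2 : Type*} [Fintype V1] [Fintype V2]
    [DecidableEq V1] [DecidableEq V2]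
    (G1 : SimpleGraph V1) (G2 : SimpleGraph V2)
    [DecidableRel G1.Adj] [DecidableRel G2.Adj]
    (π : V1 ≃ V2) (M : Matrix V1 V2 ℚ)
    (hM : ∀ (k : V1) (l : V2), M k l = if π k = l then 1 else 0)
    (i : V1) (j : V2)
    (hne : (G1.neighborSet i).Nonempty ∨ (G2.neighborSet j).Nonempty) :
    MNC G1 G2 (⇑π) i j =
      (G1.adjMatrix ℚ * M * G2.adjMatrix ℚ) i j /
        (((G1.adjMatrix ℚ * M) *ᵥ (fun _ => (1 : ℚ))) i
          + (G2.adjMatrix ℚ *ᵥ (fun _ => (1 : ℚ))) j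
          - (G1.adjMatrix ℚ * M * G2.adjMatrix ℚ) i j) :=
  mnc_matrix_form_general G1 G2 π M hM i j
end
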